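/- arXiv:2407.07486 — 2 statements merged into one kernel-verified Lean document; each statement's English description precedes it below -/
import Mathlib

section
/- Let q be a prime power and let V = F_q^(2n) carry a non-degenerate symplectic form f. Let j, k, ℓ be integers with max{0, j−k} ≤ ℓ ≤ j/2 and j ≤ 2k ≤ 2n−2, and let π be a (j−2ℓ)-singular j-dimensional subspace of V. Then the number of non-singular 2k-dimensional subspaces of V containing π equals q^(2(k−ℓ)(n−k)) · [n−j+ℓ choose k−j+ℓ]_{q²}, where [· choose ·]_{q²} is the Gaussian binomial coefficient with base q². -/
/-- `ψ⁻_{a,b}(Q) = ∏_{k=a}^{b} (Q^k − 1)`, the empty product (b = a−1) being 1. -/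
def psiMinus (Q : ℚ) (a b : ℕ) : ℚ := ∏ k ∈ Finset.Icc a b, (Q ^ k - 1)

/-- `χ_{a,b}(q) = ∏_{k=a}^{b} (q^(2k−1) − 1)`, the empty product (b = a−1) being 1. -/
def chiF (q : ℚ) (a b : ℕ) : ℚ := ∏ k ∈ Finset.Icc a b, (q ^ (2 * k - 1) - 1)

/-- The Gaussian binomial coefficient `[b choose a]_Q = ψ⁻_{b−a+1,b}(Q)/ψ⁻_{1,a}(Q)`,
set to 0 if `b < a` (the case `a < 0` cannot occur for natural `a`). -/
def gauss (Q : ℚ) (b a : ℕ) : ℚ :=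
  if a ≤ b then psiMinus Q (b - a + 1) b / psiMinus Q 1 a else 0

/-- The dimension of the radical `{w ∈ W : f(w,u) = 0 for all u ∈ W}` of a subspace `W`
with respect to the form `f`.  (For a reflexive bilinear form this set is itself a
subspace, so taking the span does not change it.) -/
noncomputable def radDim {K V : Type} [Field K] [AddCommGroup V] [Module K V]
    (f : V → V → K) (W : Submodule K V) : ℕ :=
  Module.finrank K (Submodule.span K {w : V | w ∈ W ∧ ∀ u ∈ W, f w u = 0})

/-- `f` is a non-degenerate symplectic (alternating) form: bilinear, `f(v,v) = 0`,
and non-degenerate. -/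
def IsSymplecticForm {K V : Type} [Field K] [AddCommGroup V] [Module K V]
    (f : V → V → K) : Prop :=
  (∀ u v w : V, f (u + v) w = f u w + f v w) ∧
  (∀ u v w : V, f u (v + w) = f u v + f u w) ∧
  (∀ (a : K) (v w : V), f (a • v) w = a * f v w) ∧
  (∀ (a : K) (v w : V), f v (a • w) = a * f v w) ∧
  (∀ v : V, f v v = 0) ∧
  (∀ v : V, (∀ w : V, f v w = 0) → v = 0)

namespace SympCount

noncomputable def Ncount (q : ℚ) (tn : ℕ) : ℕ → ℕ → ℕ → ℚ
  | 0, _, r => if r = 0 then 1 else 0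
  | (s+1), m, r => (q^(tn - r) - q^m) * Ncount q tn s (m+1) (r+1)
      + (q^tn - q^(tn - r)) * Ncount q tn s (m+1) (r-1)

noncomputable def Fprod (q : ℚ) (tk s : ℕ) : ℚ := ∏ u ∈ Finset.Ico (tk - s) tk, (q^tk - q^u)

lemma psiMinus_factor_ne_zero {Q : ℚ} (hQ : 1 < Q) {i : ℕ} (hi : 1 ≤ i) : Q ^ i - 1 ≠ 0 := by
  have : 1 < Q ^ i := one_lt_pow₀ hQ (by omega)
  intro h; nlinarith

lemma psiMinus_ne_zero {Q : ℚ} (hQ : 1 < Q) (b : ℕ) : psiMinus Q 1 b ≠ 0 := by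
  unfold psiMinus
  apply Finset.prod_ne_zero_iff.2
  intro i hi
  exact psiMinus_factor_ne_zero hQ (Finset.mem_Icc.1 hi).1

lemma psiMinus_succ_top {Q : ℚ} {a b : ℕ} (h : a ≤ b + 1) :
    psiMinus Q a (b+1) = psiMinus Q a b * (Q^(b+1) - 1) :=
  Finset.prod_Icc_succ_top h _

lemma gauss_zero (Q : ℚ) (b : ℕ) : gauss Q b 0 = 1 := by
  unfold gauss psiMinus
  rw [if_pos (Nat.zero_le b)]
  rw [show b - 0 + 1 = b + 1 by omega]
  rw [Finset.Icc_eq_empty (by omega), Finset.Icc_eq_empty (by omega)]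
  simp

lemma gauss_succ {Q : ℚ} (hQ : 1 < Q) (d a : ℕ) :
    (Q^(a+1) - 1) * gauss Q (d + (a+1)) (a+1) = (Q^(d+a+1) - 1) * gauss Q (d+a) a := by
  unfold gauss
  rw [if_pos (by omega), if_pos (by omega)]
  rw [show d + (a+1) - (a+1) + 1 = d + 1 by omega, show d + a - a + 1 = d + 1 by omega]
  rw [show d + (a + 1) = (d + a) + 1 by omega]
  rw [psiMinus_succ_top (by omega)]
  rw [show (a:ℕ) + 1 = a + 1 by rfl]
  rw [psiMinus_succ_top (by omega)]
  have h1 : psiMinus Q 1 a ≠ 0 := psiMinus_ne_zero hQ a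
  have h2 : Q^(a+1) - 1 ≠ 0 := psiMinus_factor_ne_zero hQ (by omega)
  field_simp

lemma Ncount_vanish (q : ℚ) (tn : ℕ) : ∀ s m r, s < r → Ncount q tn s m r = 0 := by
  intro s
  induction s with
  | zero => intro m r h; simp [Ncount]; omega
  | succ s ih =>
    intro m r h
    simp only [Ncount]
    rw [ih (m+1) (r+1) (by omega), ih (m+1) (r-1) (by omega)]
    ring

lemma Fprod_zero (q : ℚ) (tk : ℕ) : Fprod q tk 0 = 1 := by
  unfold Fprod; rw [Nat.sub_zero, Finset.Ico_self, Finset.prod_empty]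

lemma Fprod_succ {q : ℚ} {tk s : ℕ} (h : s + 1 ≤ tk) :
    Fprod q tk (s+1) = (q^tk - q^(tk - (s+1))) * Fprod q tk s := by
  unfold Fprod
  rw [Finset.prod_eq_prod_Ico_succ_bot (show tk - (s+1) < tk by omega)]
  rw [show tk - (s+1) + 1 = tk - s by omega]

lemma Fprod_ne_zero {q : ℚ} (hq : 2 ≤ q) {tk s : ℕ} (h : s ≤ tk) : Fprod q tk s ≠ 0 := by
  unfold Fprod
  apply Finset.prod_ne_zero_iff.2
  intro u hu
  have hu' : u < tk := (Finset.mem_Ico.1 hu).2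
  have : q ^ u < q ^ tk := pow_lt_pow_right₀ (by linarith) hu'
  intro hcon
  nlinarith

lemma Ncount_eq (q : ℚ) (hq : 2 ≤ q) (n k : ℕ) (hk : k ≤ n) :
    ∀ s r a l, r + 2*a = s → r + a + l = k →
      Ncount q (2*n) s (r + 2*l) r
        = q^(2*(r+a)*(n-k)) * gauss (q^2) ((n-k) + a) a * Fprod q (2*k) s := by
  have hQ : (1:ℚ) < q^2 := by nlinarith
  intro s
  induction s with
  | zero =>
    intro r a l h1 h2
    obtain ⟨rfl, rfl⟩ : r = 0 ∧ a = 0 := by omega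
    simp [Ncount, gauss_zero, Fprod_zero]
  | succ s ih =>
    intro r a l h1 h2
    have hs1 : s + 1 ≤ 2*k := by omega
    have hFs : Fprod q (2*k) (s+1) = (q^(2*k) - q^(r + 2*l)) * Fprod q (2*k) s := by
      rw [Fprod_succ hs1, show 2*k - (s+1) = r + 2*l by omega]
    simp only [Ncount]
    rcases Nat.eq_zero_or_pos a with ha | ha
    · -- a = 0, r = s+1
      subst ha
      obtain rfl : r = s + 1 := by omega
      rw [Ncount_vanish q (2*n) s (s+1+2*l+1) (s+1+1) (by omega)]
      have hc2 := ih s 0 (l+1) (by omega) (by omega)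
      rw [show s + 2*(l+1) = s+1+2*l+1 by omega] at hc2
      simp only [Nat.add_sub_cancel]
      rw [hc2, hFs, gauss_zero]
      rw [show 2*n - (s+1) = s+1+2*l+2*(n-k) by omega,
          show 2*n = (s+1+2*l+2*(n-k)) + (s+1) by omega,
          show 2*(s+0)*(n-k) = 2*s*(n-k) by ring,
          show 2*(s+1+0)*(n-k) = 2*s*(n-k) + 2*(n-k) by ring,
          show 2*k = (s+1+2*l) + (s+1) by omega]
      ring
    · -- a = a' + 1
      obtain ⟨a', rfl⟩ : ∃ a', a = a' + 1 := ⟨a-1, by omega⟩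
      have hP := gauss_succ hQ (n-k) a'
      have hc1 := ih (r+1) a' l (by omega) (by omega)
      rw [show r+1+2*l = r+2*l+1 by omega] at hc1
      rcases Nat.eq_zero_or_pos r with hr | hr
      · -- r = 0
        subst hr
        simp only [Nat.sub_zero]
        rw [sub_self, zero_mul, add_zero, hc1, hFs]
        have e1 : (q:ℚ)^(2*n) = q^(2*l + (2*a'+2) + 2*(n-k)) := by
          rw [show 2*n = 2*l + (2*a'+2) + 2*(n-k) by omega]
        have e2 : (q:ℚ)^(2*k) = q^(2*l + (2*a'+2)) := by
          rw [show 2*k = 2*l + (2*a'+2) by omega]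
        rw [e1, e2]
        linear_combination (-(q^(2*(0+1+a')*(n-k)) * Fprod q (2*k) s * (q:ℚ)^(0+2*l))) * hP
      · -- r = r'' + 1
        obtain ⟨r'', rfl⟩ : ∃ r'', r = r'' + 1 := ⟨r-1, by omega⟩
        have hc2 := ih r'' (a'+1) (l+1) (by omega) (by omega)
        rw [show r''+2*(l+1) = r''+1+2*l+1 by omega] at hc2
        simp only [Nat.add_sub_cancel]
        rw [hc1, hc2, hFs]
        have e1 : (q:ℚ)^(2*n - (r''+1)) = q^((r''+1+2*l) + (2*a'+2) + 2*(n-k)) := by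
          rw [show 2*n - (r''+1) = (r''+1+2*l) + (2*a'+2) + 2*(n-k) by omega]
        have e2 : (q:ℚ)^(2*n) = q^((r''+1+2*l) + (2*a'+2) + 2*(n-k) + (r''+1)) := by
          rw [show 2*n = (r''+1+2*l) + (2*a'+2) + 2*(n-k) + (r''+1) by omega]
        have e3 : (q:ℚ)^(2*k) = q^((r''+1+2*l) + (2*a'+2) + (r''+1)) := by
          rw [show 2*k = (r''+1+2*l) + (2*a'+2) + (r''+1) by omega]
        rw [e1, e2, e3]
        linear_combination (-(q^(2*(r''+1+1+a')*(n-k)) * Fprod q (2*k) s * (q:ℚ)^(r''+1+2*l))) * hP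

section LinAlg

variable {K V : Type} [Field K] [AddCommGroup V] [Module K V]

variable {f : V → V → K}

/-- the bilinear form associated to `f`. -/
noncomputable def toB (f : V → V → K) (hf : IsSymplecticForm f) : LinearMap.BilinForm K V :=
  LinearMap.mk₂ K f hf.1 (fun c m n => by rw [hf.2.2.1]; rfl) hf.2.1
    (fun c m n => by rw [hf.2.2.2.1]; rfl)

@[simp] lemma toB_apply (hf : IsSymplecticForm f) (v w : V) : toB f hf v w = f v w := rfl

lemma skew (hf : IsSymplecticForm f) (x y : V) : f x y = - f y x := by
  have h := hf.2.2.2.2.1 (x + y)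
  rw [hf.1, hf.2.1, hf.2.1, hf.2.2.2.2.1, hf.2.2.2.2.1] at h
  linear_combination h

lemma isRefl (hf : IsSymplecticForm f) : (toB f hf).IsRefl := by
  intro x y h
  simp only [toB_apply] at *
  rw [skew hf]; simp [h]

variable (hf : IsSymplecticForm f)

lemma mem_orth {W : Submodule K V} {x : V} :
    x ∈ (toB f hf).orthogonal W ↔ ∀ u ∈ W, f u x = 0 := by
  simp [LinearMap.BilinForm.mem_orthogonal_iff, LinearMap.BilinForm.isOrtho_def]

/-- the radical of `W`. -/
noncomputable def radS (hf : IsSymplecticForm f) (W : Submodule K V) : Submodule K V :=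
  W ⊓ (toB f hf).orthogonal W

lemma mem_radS {W : Submodule K V} {x : V} :
    x ∈ radS hf W ↔ x ∈ W ∧ ∀ u ∈ W, f u x = 0 := by
  simp [radS, mem_orth, LinearMap.BilinForm.isOrtho_def]

lemma radDim_eq (W : Submodule K V) :
    radDim f W = Module.finrank K (radS hf W) := by
  unfold radDim
  have hset : {w : V | w ∈ W ∧ ∀ u ∈ W, f w u = 0} = ↑(radS hf W) := by
    ext x
    simp only [Set.mem_setOf_eq, SetLike.mem_coe, mem_radS hf]
    constructor
    · rintro ⟨h1, h2⟩
      exact ⟨h1, fun u hu => by rw [skew hf, h2 u hu, neg_zero]⟩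
    · rintro ⟨h1, h2⟩
      exact ⟨h1, fun u hu => by rw [skew hf, h2 u hu, neg_zero]⟩
  rw [hset, Submodule.span_eq]

section FinDim
variable [FiniteDimensional K V]

lemma orth_top : (toB f hf).orthogonal ⊤ = ⊥ := by
  rw [eq_bot_iff]
  intro x hx
  rw [mem_orth hf] at hx
  have hx' : ∀ w, f x w = 0 := fun w => by
    rw [skew hf, hx w Submodule.mem_top, neg_zero]
  simpa using hf.2.2.2.2.2 x hx'

lemma finrank_add_finrank_orth (U : Submodule K V) :
    Module.finrank K U + Module.finrank K ((toB f hf).orthogonal U) = Module.finrank K V := by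
  have h := LinearMap.BilinForm.finrank_add_finrank_orthogonal (isRefl hf) U
  rw [orth_top hf, inf_bot_eq, finrank_bot, add_zero] at h
  exact h

lemma finrank_sup_orth (U : Submodule K V) :
    Module.finrank K (U ⊔ (toB f hf).orthogonal U : Submodule K V)
      + Module.finrank K (radS hf U) = Module.finrank K V := by
  have h1 := Submodule.finrank_sup_add_finrank_inf_eq U ((toB f hf).orthogonal U)
  have h2 := finrank_add_finrank_orth hf U
  unfold radS
  omega

lemma finrank_sup_span_singleton {W : Submodule K V} {w : V} (hw : w ∉ W) :
    Module.finrank K (W ⊔ Submodule.span K {w} : Submodule K V) = Module.finrank K W + 1 := by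
  have h0 : w ≠ 0 := by rintro rfl; exact hw W.zero_mem
  have hinf : W ⊓ Submodule.span K {w} = ⊥ := by
    rw [eq_bot_iff]
    rintro x hx
    obtain ⟨hxW, hxs⟩ := Submodule.mem_inf.1 hx
    obtain ⟨c, rfl⟩ := Submodule.mem_span_singleton.1 hxs
    rcases eq_or_ne c 0 with rfl | hc
    · simp
    · have hm := W.smul_mem c⁻¹ hxW
      rw [smul_smul, inv_mul_cancel₀ hc, one_smul] at hm
      exact absurd hm hw
  have h := Submodule.finrank_sup_add_finrank_inf_eq W (Submodule.span K {w})
  rw [hinf, finrank_bot, finrank_span_singleton h0] at h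
  omega

lemma finrank_inf_ker {W : Submodule K V} {φ : V →ₗ[K] K} {ρ : V}
    (hρW : ρ ∈ W) (hρ : φ ρ ≠ 0) :
    Module.finrank K (W ⊓ LinearMap.ker φ : Submodule K V) + 1 = Module.finrank K W := by
  set ψ := φ.comp W.subtype with hψ
  have hker : (LinearMap.ker ψ).map W.subtype = W ⊓ LinearMap.ker φ := by
    ext x
    simp only [Submodule.mem_map, LinearMap.mem_ker, Submodule.mem_inf, hψ,
      LinearMap.comp_apply, Submodule.coe_subtype]
    constructor
    · rintro ⟨⟨y, hy⟩, h1, rfl⟩; exact ⟨hy, h1⟩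
    · rintro ⟨h1, h2⟩; exact ⟨⟨x, h1⟩, h2, rfl⟩
  have hrange : LinearMap.range ψ = ⊤ := by
    rw [eq_top_iff]
    intro c _
    have hmem : φ ρ ∈ LinearMap.range ψ := ⟨⟨ρ, hρW⟩, rfl⟩
    have := Submodule.smul_mem (LinearMap.range ψ) (c * (φ ρ)⁻¹) hmem
    rwa [smul_eq_mul, mul_assoc, inv_mul_cancel₀ hρ, mul_one] at this
  have h := LinearMap.finrank_range_add_finrank_ker ψ
  rw [hrange, finrank_top, Module.finrank_self] at h
  rw [← hker, Submodule.finrank_map_subtype_eq]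
  omega

lemma sup_orth_eq (U : Submodule K V) :
    U ⊔ (toB f hf).orthogonal U = (toB f hf).orthogonal (radS hf U) := by
  have hle : U ⊔ (toB f hf).orthogonal U ≤ (toB f hf).orthogonal (radS hf U) := by
    refine sup_le ?_ (LinearMap.BilinForm.orthogonal_le inf_le_left)
    intro u hu
    rw [mem_orth hf]
    intro ρ hρ
    rw [mem_radS hf] at hρ
    rw [skew hf, hρ.2 u hu, neg_zero]
  refine Submodule.eq_of_le_of_finrank_le hle ?_
  have h1 := finrank_sup_orth hf U
  have h2 := finrank_add_finrank_orth hf (radS hf U)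
  omega

lemma radS_sup_of_mem_orth {U : Submodule K V} {w : V}
    (hwp : w ∈ (toB f hf).orthogonal U) (hw : w ∉ U) :
    radS hf (U ⊔ Submodule.span K {w}) = radS hf U ⊔ Submodule.span K {w} := by
  have hwperp : ∀ u ∈ U, f u w = 0 := (mem_orth hf).1 hwp
  apply le_antisymm
  · intro x hx
    rw [mem_radS hf] at hx
    obtain ⟨hxm, hxo⟩ := hx
    obtain ⟨u, hu, z, hz, rfl⟩ := Submodule.mem_sup.1 hxm
    obtain ⟨c, rfl⟩ := Submodule.mem_span_singleton.1 hz
    have huU : u ∈ radS hf U := by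
      rw [mem_radS hf]
      refine ⟨hu, fun z hzU => ?_⟩
      have h1 : f z (u + c • w) = 0 := hxo z (Submodule.mem_sup_left hzU)
      rw [hf.2.1, hf.2.2.2.1, hwperp z hzU, mul_zero, add_zero] at h1
      exact h1
    exact Submodule.add_mem _ (Submodule.mem_sup_left huU)
      (Submodule.mem_sup_right (Submodule.smul_mem _ c (Submodule.mem_span_singleton_self w)))
  · refine sup_le ?_ ?_
    · intro ρ hρ
      rw [mem_radS hf] at hρ ⊢
      refine ⟨Submodule.mem_sup_left hρ.1, fun y hy => ?_⟩
      obtain ⟨u, hu, z, hz, rfl⟩ := Submodule.mem_sup.1 hy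
      obtain ⟨c, rfl⟩ := Submodule.mem_span_singleton.1 hz
      have h2 : f w ρ = 0 := by rw [skew hf, hwperp ρ hρ.1, neg_zero]
      rw [hf.1, hf.2.2.1, hρ.2 u hu, h2, mul_zero, add_zero]
    · rw [Submodule.span_le]
      rintro x rfl
      rw [SetLike.mem_coe, mem_radS hf]
      refine ⟨Submodule.mem_sup_right (Submodule.mem_span_singleton_self _), fun y hy => ?_⟩
      obtain ⟨u, hu, z, hz, rfl⟩ := Submodule.mem_sup.1 hy
      obtain ⟨c, rfl⟩ := Submodule.mem_span_singleton.1 hz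
      rw [hf.1, hf.2.2.1, hwperp u hu, hf.2.2.2.2.1, mul_zero, add_zero]

lemma radDim_step_up {U : Submodule K V} {w : V}
    (hwT : w ∈ U ⊔ (toB f hf).orthogonal U) (hw : w ∉ U) :
    Module.finrank K (radS hf (U ⊔ Submodule.span K {w}))
      = Module.finrank K (radS hf U) + 1 := by
  obtain ⟨u, hu, v, hv, rfl⟩ := Submodule.mem_sup.1 hwT
  have hvU : v ∉ U := fun h => hw (Submodule.add_mem _ hu h)
  have hsup : U ⊔ Submodule.span K {u + v} = U ⊔ Submodule.span K {v} := by
    apply le_antisymm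
    · refine sup_le le_sup_left ((Submodule.span_singleton_le_iff_mem _ _).2 ?_)
      exact Submodule.add_mem _ (Submodule.mem_sup_left hu)
        (Submodule.mem_sup_right (Submodule.mem_span_singleton_self _))
    · refine sup_le le_sup_left ((Submodule.span_singleton_le_iff_mem _ _).2 ?_)
      have h1 := Submodule.sub_mem (U ⊔ Submodule.span K {u + v})
        (Submodule.mem_sup_right (Submodule.mem_span_singleton_self (u + v)))
        (Submodule.mem_sup_left hu)
      simpa using h1
  have hvrad : v ∉ radS hf U := fun h => hvU ((mem_radS hf).1 h).1
  rw [hsup, radS_sup_of_mem_orth hf hv hvU, finrank_sup_span_singleton hvrad]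

lemma radDim_step_down {U : Submodule K V} {w : V}
    (hwT : w ∉ U ⊔ (toB f hf).orthogonal U) :
    Module.finrank K (radS hf (U ⊔ Submodule.span K {w})) + 1
      = Module.finrank K (radS hf U) := by
  have hw : w ∉ U := fun h => hwT (Submodule.mem_sup_left h)
  set φ := (toB f hf).flip w with hφ
  have hφ_apply : ∀ x, φ x = f x w := fun x => rfl
  obtain ⟨ρ, hρ, hρw⟩ : ∃ ρ ∈ radS hf U, f ρ w ≠ 0 := by
    by_contra hcon
    push_neg at hcon
    exact hwT (by rw [sup_orth_eq hf, mem_orth hf]; exact hcon)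
  have hset : radS hf (U ⊔ Submodule.span K {w}) = radS hf U ⊓ LinearMap.ker φ := by
    apply le_antisymm
    · intro x hx
      rw [mem_radS hf] at hx
      obtain ⟨hxm, hxo⟩ := hx
      obtain ⟨u', hu', z, hz, rfl⟩ := Submodule.mem_sup.1 hxm
      obtain ⟨c, rfl⟩ := Submodule.mem_span_singleton.1 hz
      have hc : c = 0 := by
        by_contra hc
        apply hwT
        have hxU : ∀ z ∈ U, f z (c⁻¹ • (u' + c • w)) = 0 := fun z hzU => by
          rw [hf.2.2.2.1, hxo z (Submodule.mem_sup_left hzU), mul_zero]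
        refine Submodule.mem_sup.2 ⟨-(c⁻¹ • u'),
          Submodule.neg_mem _ (Submodule.smul_mem _ _ hu'),
          c⁻¹ • (u' + c • w), (mem_orth hf).2 hxU, ?_⟩
        rw [smul_add, smul_smul, inv_mul_cancel₀ hc, one_smul]
        abel
      subst hc
      simp only [zero_smul, add_zero] at hxo ⊢
      refine Submodule.mem_inf.2 ⟨(mem_radS hf).2
        ⟨hu', fun z hzU => hxo z (Submodule.mem_sup_left hzU)⟩, ?_⟩
      rw [LinearMap.mem_ker, hφ_apply]
      rw [skew hf, hxo w (Submodule.mem_sup_right (Submodule.mem_span_singleton_self _)),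
        neg_zero]
    · intro x hx
      obtain ⟨hx1, hx2⟩ := Submodule.mem_inf.1 hx
      rw [LinearMap.mem_ker, hφ_apply] at hx2
      rw [mem_radS hf] at hx1 ⊢
      refine ⟨Submodule.mem_sup_left hx1.1, fun y hy => ?_⟩
      obtain ⟨u', hu', z, hz, rfl⟩ := Submodule.mem_sup.1 hy
      obtain ⟨c, rfl⟩ := Submodule.mem_span_singleton.1 hz
      have h2 : f w x = 0 := by rw [skew hf, hx2, neg_zero]
      rw [hf.1, hf.2.2.1, hx1.2 u' hu', h2, mul_zero, add_zero]
  rw [hset]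
  exact finrank_inf_ker hρ (by rw [hφ_apply]; exact hρw)

end FinDim

section Counting

variable [Fintype K] [Fintype V] [FiniteDimensional K V]

open Classical in
noncomputable def Ecount (f : V → V → K) : ℕ → Submodule K V → ℚ
  | 0, U => if radDim f U = 0 then 1 else 0
  | (s+1), U => ∑ w : V, if w ∉ U then Ecount f s (U ⊔ Submodule.span K {w}) else 0

open Classical Finset in
lemma card_filter_mem (T : Submodule K V) :
    (Finset.univ.filter (· ∈ T)).card = Fintype.card K ^ Module.finrank K T := by
  rw [← Fintype.card_subtype]
  rw [← Module.card_eq_pow_finrank (K := K) (V := T)]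

open Classical Finset in
lemma card_filter_diff {U T : Submodule K V} (h : U ≤ T) :
    (Finset.univ.filter (fun w => w ∈ T ∧ w ∉ U)).card
      = Fintype.card K ^ Module.finrank K T - Fintype.card K ^ Module.finrank K U := by
  have hs : Finset.univ.filter (fun w => w ∈ T ∧ w ∉ U)
      = Finset.univ.filter (· ∈ T) \ Finset.univ.filter (· ∈ U) := by
    ext w; simp only [Finset.mem_filter, Finset.mem_sdiff, Finset.mem_univ, true_and]
  have hsub : Finset.univ.filter (· ∈ U) ⊆ Finset.univ.filter (· ∈ T) := by
    intro w hw
    simp only [Finset.mem_filter, Finset.mem_univ, true_and] at hw ⊢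
    exact h hw
  rw [hs, Finset.card_sdiff_of_subset hsub, card_filter_mem, card_filter_mem]

open Classical Finset in
lemma card_filter_notMem (T : Submodule K V) :
    (Finset.univ.filter (· ∉ T)).card
      = Fintype.card K ^ Module.finrank K V - Fintype.card K ^ Module.finrank K T := by
  have h1 := Finset.card_filter_add_card_filter_not (s := Finset.univ) (p := (· ∈ T))
  rw [card_filter_mem, Finset.card_univ, Module.card_eq_pow_finrank (K := K) (V := V)] at h1
  omega

lemma sum_ite_const (p : V → Prop) [DecidablePred p] (c : ℚ) :
    (∑ w : V, if p w then c else 0) = ((Finset.univ.filter p).card : ℚ) * c := by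
  rw [← Finset.sum_filter, Finset.sum_const, nsmul_eq_mul]

open Classical in
lemma ecount_eq (hf : IsSymplecticForm f) : ∀ (s : ℕ) (U : Submodule K V),
    Ecount f s U = Ncount (Fintype.card K) (Module.finrank K V) s
      (Module.finrank K U) (Module.finrank K (radS hf U)) := by
  intro s
  induction s with
  | zero =>
    intro U
    simp only [Ecount, Ncount, radDim_eq hf]
  | succ s ih =>
    intro U
    simp only [Ecount]
    have hUT : U ≤ U ⊔ (toB f hf).orthogonal U := le_sup_left
    have hptw : ∀ w : V, (if w ∉ U then Ecount f s (U ⊔ Submodule.span K {w}) else 0)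
        = (if w ∈ U ⊔ (toB f hf).orthogonal U ∧ w ∉ U then
            Ncount (Fintype.card K) (Module.finrank K V) s
              (Module.finrank K U + 1) (Module.finrank K (radS hf U) + 1) else 0)
          + (if w ∉ U ⊔ (toB f hf).orthogonal U then
            Ncount (Fintype.card K) (Module.finrank K V) s
              (Module.finrank K U + 1) (Module.finrank K (radS hf U) - 1) else 0) := by
      intro w
      by_cases hwU : w ∈ U
      · rw [if_neg (by simp [hwU]), if_neg (by tauto), if_neg (fun h => h (hUT hwU))]
        ring
      · rw [if_pos hwU, ih]
        by_cases hwT : w ∈ U ⊔ (toB f hf).orthogonal U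
        · rw [if_pos ⟨hwT, hwU⟩, if_neg (by tauto), add_zero]
          rw [finrank_sup_span_singleton hwU, radDim_step_up hf hwT hwU]
        · rw [if_neg (by tauto), if_pos hwT, zero_add]
          have hd := radDim_step_down hf hwT
          rw [finrank_sup_span_singleton hwU,
            show Module.finrank K (radS hf (U ⊔ Submodule.span K {w}))
              = Module.finrank K (radS hf U) - 1 by omega]
    rw [Finset.sum_congr rfl (fun w _ => hptw w), Finset.sum_add_distrib,
      sum_ite_const, sum_ite_const, card_filter_diff hUT, card_filter_notMem]
    have hTd : Module.finrank K (U ⊔ (toB f hf).orthogonal U : Submodule K V)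
        = Module.finrank K V - Module.finrank K (radS hf U) := by
      have := finrank_sup_orth hf U
      omega
    have hrle : Module.finrank K (radS hf U) ≤ Module.finrank K V :=
      le_trans (Submodule.finrank_le _) (le_refl _)
    have hmle : Module.finrank K U ≤ Module.finrank K V - Module.finrank K (radS hf U) := by
      have h2 : Module.finrank K U ≤ Module.finrank K
          (U ⊔ (toB f hf).orthogonal U : Submodule K V) := Submodule.finrank_mono hUT
      omega
    have hq1 : 1 ≤ Fintype.card K := Fintype.card_pos
    rw [hTd]
    rw [Nat.cast_sub (Nat.pow_le_pow_right hq1 hmle),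
      Nat.cast_sub (Nat.pow_le_pow_right hq1 (Nat.sub_le _ _))]
    simp only [Ncount]
    push_cast
    ring

open Classical Finset in
lemma ecount_eq_card (hf : IsSymplecticForm f) (tk : ℕ) :
    ∀ (s : ℕ) (U : Submodule K V), Module.finrank K U + s = tk →
      Ecount f s U
        = (Nat.card {σ : Submodule K V // U ≤ σ ∧ Module.finrank K σ = tk ∧ radDim f σ = 0} : ℚ)
          * Fprod (Fintype.card K) tk s := by
  haveI : Finite (Submodule K V) := Finite.of_injective _ SetLike.coe_injective
  haveI : Fintype (Submodule K V) := Fintype.ofFinite _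
  have hcard : ∀ (X : Submodule K V),
      (Nat.card {σ : Submodule K V // X ≤ σ ∧ Module.finrank K σ = tk ∧ radDim f σ = 0})
        = (univ.filter (fun σ : Submodule K V =>
            X ≤ σ ∧ Module.finrank K σ = tk ∧ radDim f σ = 0)).card := by
    intro X
    rw [Nat.card_eq_fintype_card, Fintype.card_subtype]
  intro s
  induction s with
  | zero =>
    intro U hU
    rw [Nat.add_zero] at hU
    rw [Fprod_zero, mul_one]
    simp only [Ecount]
    by_cases hrad : radDim f U = 0
    · rw [if_pos hrad]
      have h1 : Nat.card {σ : Submodule K V //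
          U ≤ σ ∧ Module.finrank K σ = tk ∧ radDim f σ = 0} = 1 := by
        rw [Nat.card_eq_one_iff_unique]
        constructor
        · constructor
          rintro ⟨σ1, hσ1⟩ ⟨σ2, hσ2⟩
          have e1 : U = σ1 := Submodule.eq_of_le_of_finrank_le hσ1.1 (by omega)
          have e2 : U = σ2 := Submodule.eq_of_le_of_finrank_le hσ2.1 (by omega)
          exact Subtype.ext (e1 ▸ e2 ▸ rfl)
        · exact ⟨⟨U, le_refl U, hU, hrad⟩⟩
      rw [h1, Nat.cast_one]
    · rw [if_neg hrad]
      haveI : IsEmpty {σ : Submodule K V //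
          U ≤ σ ∧ Module.finrank K σ = tk ∧ radDim f σ = 0} := by
        constructor
        rintro ⟨σ, h1, h2, h3⟩
        have e1 : U = σ := Submodule.eq_of_le_of_finrank_le h1 (by omega)
        exact hrad (e1 ▸ h3)
      rw [Nat.card_of_isEmpty, Nat.cast_zero]
  | succ s ih =>
    intro U hU
    simp only [Ecount]
    have hq1 : 1 ≤ Fintype.card K := Fintype.card_pos
    have hptw : ∀ w : V, (if w ∉ U then Ecount f s (U ⊔ Submodule.span K {w}) else 0)
        = (if w ∉ U then ((univ.filter (fun σ : Submodule K V =>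
            U ⊔ Submodule.span K {w} ≤ σ ∧ Module.finrank K σ = tk ∧ radDim f σ = 0)).card : ℚ)
            else 0)
          * Fprod (Fintype.card K) tk s := by
      intro w
      by_cases hw : w ∈ U
      · rw [if_neg (by simpa using hw), if_neg (by simpa using hw), zero_mul]
      · rw [if_pos hw, if_pos hw, ih _ (by rw [finrank_sup_span_singleton hw]; omega), hcard]
    rw [Finset.sum_congr rfl (fun w _ => hptw w), ← Finset.sum_mul]
    have hkey : (∑ w : V, if w ∉ U then (univ.filter (fun σ : Submodule K V =>
          U ⊔ Submodule.span K {w} ≤ σ ∧ Module.finrank K σ = tk ∧ radDim f σ = 0)).card else 0)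
        = (univ.filter (fun σ : Submodule K V =>
            U ≤ σ ∧ Module.finrank K σ = tk ∧ radDim f σ = 0)).card
          * (Fintype.card K ^ tk - Fintype.card K ^ Module.finrank K U) := by
      have e1 : ∀ w : V, (if w ∉ U then (univ.filter (fun σ : Submodule K V =>
            U ⊔ Submodule.span K {w} ≤ σ ∧ Module.finrank K σ = tk ∧ radDim f σ = 0)).card else 0)
          = ∑ σ : Submodule K V, if (U ≤ σ ∧ Module.finrank K σ = tk ∧ radDim f σ = 0)
              ∧ w ∈ σ ∧ w ∉ U then 1 else 0 := by
        intro w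
        by_cases hw : w ∈ U
        · rw [if_neg (by simpa using hw)]
          symm
          apply Finset.sum_eq_zero
          intro σ _
          rw [if_neg (by tauto)]
        · rw [if_pos hw, Finset.card_filter]
          apply Finset.sum_congr rfl
          intro σ _
          refine if_congr ?_ rfl rfl
          rw [sup_le_iff, Submodule.span_singleton_le_iff_mem]
          tauto
      rw [Finset.sum_congr rfl (fun w _ => e1 w), Finset.sum_comm]
      have e2 : ∀ σ : Submodule K V,
          (∑ w : V, if (U ≤ σ ∧ Module.finrank K σ = tk ∧ radDim f σ = 0)
              ∧ w ∈ σ ∧ w ∉ U then 1 else 0)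
            = if U ≤ σ ∧ Module.finrank K σ = tk ∧ radDim f σ = 0
              then Fintype.card K ^ tk - Fintype.card K ^ Module.finrank K U else 0 := by
        intro σ
        by_cases hσ : U ≤ σ ∧ Module.finrank K σ = tk ∧ radDim f σ = 0
        · rw [if_pos hσ]
          have e3 : (∑ w : V, if (U ≤ σ ∧ Module.finrank K σ = tk ∧ radDim f σ = 0)
                ∧ w ∈ σ ∧ w ∉ U then 1 else 0)
              = ∑ w : V, if w ∈ σ ∧ w ∉ U then 1 else 0 := by
            apply Finset.sum_congr rfl
            intro w _
            exact if_congr (by tauto) rfl rfl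
          rw [e3, ← Finset.card_filter, card_filter_diff hσ.1, hσ.2.1]
        · rw [if_neg hσ]
          apply Finset.sum_eq_zero
          intro w _
          rw [if_neg (by tauto)]
      rw [Finset.sum_congr rfl (fun σ _ => e2 σ)]
      rw [← Finset.sum_filter, Finset.sum_const, smul_eq_mul]
    have hSN : (∑ w : V, if w ∉ U then ((univ.filter (fun σ : Submodule K V =>
          U ⊔ Submodule.span K {w} ≤ σ ∧ Module.finrank K σ = tk ∧ radDim f σ = 0)).card : ℚ)
          else 0)
        = ((∑ w : V, if w ∉ U then (univ.filter (fun σ : Submodule K V =>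
            U ⊔ Submodule.span K {w} ≤ σ ∧ Module.finrank K σ = tk ∧ radDim f σ = 0)).card
            else 0 : ℕ) : ℚ) := by
      rw [Nat.cast_sum]
      apply Finset.sum_congr rfl
      intro w _
      split_ifs <;> simp
    have hsub : Fintype.card K ^ Module.finrank K U ≤ Fintype.card K ^ tk :=
      Nat.pow_le_pow_right hq1 (by omega)
    rw [hSN, hkey]
    push_cast [Nat.cast_sub hsub]
    rw [← hcard U]
    have hF : Fprod (Fintype.card K) tk (s+1)
        = ((Fintype.card K : ℚ)^tk - (Fintype.card K : ℚ)^(Module.finrank K U))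
          * Fprod (Fintype.card K) tk s := by
      rw [Fprod_succ (by omega), show tk - (s+1) = Module.finrank K U by omega]
    rw [hF]
    ring

end Counting

end LinAlg

end SympCount

theorem symplectic_beta
    (p t q : ℕ) (hp : p.Prime) (ht : 0 < t) (hq : q = p ^ t)
    (K : Type) [Field K] [Fintype K] (hK : Fintype.card K = q)
    (n : ℕ)
    (f : (Fin (2 * n) → K) → (Fin (2 * n) → K) → K) (hf : IsSymplecticForm f)
    (j k ℓ : ℕ) (hℓ1 : j ≤ k + ℓ) (hℓ2 : 2 * ℓ ≤ j) (hk1 : j ≤ 2 * k)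
    (hk2 : 2 * k ≤ 2 * n - 2)
    (π : Submodule K (Fin (2 * n) → K))
    (hπd : Module.finrank K π = j) (hπs : radDim f π = j - 2 * ℓ) :
    (Nat.card {σ : Submodule K (Fin (2 * n) → K) //
        π ≤ σ ∧ Module.finrank K σ = 2 * k ∧ radDim f σ = 0} : ℚ) =
      (q : ℚ) ^ (2 * (k - ℓ) * (n - k)) * gauss ((q : ℚ) ^ 2) (n + ℓ - j) (k + ℓ - j) := by
  classical
  have hq2 : 2 ≤ q := by
    subst hq
    calc 2 ≤ p := hp.two_le
    _ ≤ p ^ t := Nat.le_self_pow (by omega) p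
  have hdimV : Module.finrank K (Fin (2*n) → K) = 2*n := Module.finrank_fin_fun K
  have hkn : k ≤ n := by omega
  have hs : Module.finrank K π + (2*k - j) = 2*k := by rw [hπd]; omega
  have h2 := SympCount.ecount_eq_card (f := f) hf (2*k) (2*k - j) π hs
  have h1 := SympCount.ecount_eq (f := f) hf (2*k - j) π
  have hrad : Module.finrank K (SympCount.radS hf π) = j - 2*ℓ := by
    rw [← SympCount.radDim_eq hf]
    exact hπs
  rw [hπd, hrad, hdimV, hK] at h1
  have h3 := SympCount.Ncount_eq (q:ℚ) (by exact_mod_cast hq2) n k hkn (2*k-j) (j-2*ℓ)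
    (k+ℓ-j) ℓ (by omega) (by omega)
  rw [show j - 2*ℓ + 2*ℓ = j by omega] at h3
  rw [h3] at h1
  rw [hK] at h2
  have hne : SympCount.Fprod (q:ℚ) (2*k) (2*k-j) ≠ 0 :=
    SympCount.Fprod_ne_zero (by exact_mod_cast hq2) (by omega)
  have hmain := mul_right_cancel₀ hne (h2.symm.trans h1)
  rw [hmain]
  rw [show 2*((j-2*ℓ)+(k+ℓ-j))*(n-k) = 2*(k-ℓ)*(n-k) by
      congr 1; omega,
    show (n-k)+(k+ℓ-j) = n+ℓ-j by omega]
end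

section
/- Let q be a prime power and let V = F_q^(2n) carry a non-degenerate symplectic form f. Let j, ℓ be integers with max{0, j−n+1} ≤ ℓ ≤ j/2 and j ≤ 2n−2, and let π be a (j−2ℓ)-singular j-dimensional subspace of V. Then the number of non-singular (2n−2)-dimensional subspaces of V containing π equals q^(2(n−ℓ−1)) · (q^(2(n−j+ℓ)) − 1)/(q² − 1). -/
/-! Taking orthogonal complements matches the non-singular subspaces of codimension 2 containing
`π` with the non-singular planes inside `W = π^⊥`, and `W` has the same radical as `π`. These
planes are counted by double counting hyperbolic pairs `(e, e')` in `W`, i.e. `f(e, e') = 1`: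
each pair spans a non-singular plane, each non-singular plane contains `(q² - 1) q` of them, and
`W` contains `(q^dim W - q^dim rad W) q^(dim W - 1)` of them, since `e` ranges over `W` outside
its radical and then `e'` over an affine hyperplane of `W`. -/

open Module Submodule

theorem Module.Dual.natCard_preimage_singleton {K V : Type*} [Field K] [Finite K]
    [AddCommGroup V] [Module K V] [FiniteDimensional K V] {φ : Module.Dual K V} (hφ : φ ≠ 0)
    (c : K) : Nat.card (φ ⁻¹' {c}) = Nat.card K ^ (finrank K V - 1) := by
  change Nat.card ((φ : V →+ K) ⁻¹' {c}) = _
  rw [Nat.card_congr (AddMonoidHom.fiberEquivKerOfSurjective (f := (φ : V →+ K))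
    (LinearMap.surjective hφ) c), ← finrank_ker_add_one_of_ne_zero hφ, Nat.add_sub_cancel,
    ← natCard_eq_pow_finrank]
  rfl

namespace LinearMap.BilinForm

variable {K V : Type*} [Field K] [AddCommGroup V] [Module K V]

def hyperbolicPairs (B : LinearMap.BilinForm K V) (W : Submodule K V) : Set (V × V) :=
  {x | x.1 ∈ W ∧ x.2 ∈ W ∧ B x.1 x.2 = 1}

def nonsingularPlanes (B : LinearMap.BilinForm K V) (W : Submodule K V) : Set (Submodule K V) :=
  {H | H ≤ W ∧ finrank K H = 2 ∧ H ⊓ B.orthogonal H = ⊥}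

variable {B : LinearMap.BilinForm K V}

theorem natCard_hyperbolicPairs [Finite K] [FiniteDimensional K V] (hB : B.IsAlt)
    (W : Submodule K V) :
    Nat.card (B.hyperbolicPairs W) =
      (Nat.card K ^ finrank K W - Nat.card K ^ finrank K ↥(W ⊓ B.orthogonal W)) *
        Nat.card K ^ (finrank K W - 1) := by
  classical
  have : Finite V := Module.finite_iff_finite (R := K) |>.mp inferInstance
  let φ : W → Module.Dual K W := fun v => (B v).domRestrict W
  have hφ : ∀ v : W, φ v = 0 ↔ (v : V) ∈ B.orthogonal W := fun v => by
    simp only [φ, mem_orthogonal_iff, LinearMap.ext_iff, Subtype.forall, domRestrict_apply]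
    exact forall₂_congr fun w _ => hB.eq_iff
  have hne : ∀ v w : W, B v w = 1 → φ v ≠ 0 := fun v w h h0 => by
    simpa [φ, h] using LinearMap.congr_fun h0 w
  let e : B.hyperbolicPairs W ≃ Σ v : {v : W // φ v ≠ 0}, (φ v ⁻¹' {1}) :=
    { toFun := fun x => ⟨⟨⟨x.1.1, x.2.1⟩, hne ⟨_, x.2.1⟩ ⟨_, x.2.2.1⟩ x.2.2.2⟩,
        ⟨x.1.2, x.2.2.1⟩, x.2.2.2⟩
      invFun := fun s => ⟨(s.1.1, s.2.1), s.1.1.2, s.2.1.2, s.2.2⟩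
      left_inv := fun x => rfl
      right_inv := fun s => rfl }
  have hrad : Nat.card {v : W // φ v = 0} = Nat.card K ^ finrank K ↥(W ⊓ B.orthogonal W) := by
    rw [← natCard_eq_pow_finrank]
    exact Nat.card_congr
      { toFun := fun v => ⟨v.1, v.1.2, (hφ v.1).1 v.2⟩
        invFun := fun x => ⟨⟨x.1, x.2.1⟩, (hφ _).2 x.2.2⟩
        left_inv := fun v => rfl
        right_inv := fun x => rfl }
  have hsplit : Nat.card {v : W // φ v = 0} + Nat.card {v : W // φ v ≠ 0} =
      Nat.card K ^ finrank K W := by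
    rw [← Nat.card_sum, Nat.card_congr (Equiv.sumCompl _), natCard_eq_pow_finrank (K := K)]
  have := Fintype.ofFinite {v : W // φ v ≠ 0}
  rw [Nat.card_congr e, Nat.card_sigma]
  simp only [fun v : {v : W // φ v ≠ 0} => Module.Dual.natCard_preimage_singleton v.2 1]
  rw [Finset.sum_const, Finset.card_univ, smul_eq_mul, ← Nat.card_eq_fintype_card]
  congr 1
  omega

theorem linearIndependent_pair_of_apply_eq_one (hB : B.IsAlt) {v w : V} (h : B v w = 1) :
    LinearIndependent K ![v, w] := by
  rw [LinearIndependent.pair_iff]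
  intro a b hab
  have hv := congrArg (B v) hab
  have hw := congrArg (fun x => B x w) hab
  simp only [map_add, map_smul, LinearMap.add_apply, LinearMap.smul_apply, smul_eq_mul, h, hB v,
    hB w, map_zero, LinearMap.zero_apply, mul_zero, mul_one, add_zero, zero_add] at hv hw
  exact ⟨hw, hv⟩

theorem finrank_span_pair_of_apply_eq_one (hB : B.IsAlt) {v w : V} (h : B v w = 1) :
    finrank K (span K {v, w}) = 2 := by
  rw [← Matrix.range_cons_cons_empty v w ![], finrank_span_eq_card
    (linearIndependent_pair_of_apply_eq_one hB h), Fintype.card_fin]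

theorem span_pair_inf_orthogonal_eq_bot (hB : B.IsAlt) {v w : V} (h : B v w = 1) :
    span K {v, w} ⊓ B.orthogonal (span K {v, w}) = ⊥ := by
  refine eq_bot_iff.mpr fun x ⟨hx, hxo⟩ => ?_
  obtain ⟨a, b, rfl⟩ := mem_span_pair.mp hx
  have hv : B v (a • v + b • w) = 0 := hxo v (subset_span (by simp))
  have hw : B w (a • v + b • w) = 0 := hxo w (subset_span (by simp))
  have hwv : B w v = -1 := by rw [← hB.neg_eq, h]
  simp only [map_add, map_smul, smul_eq_mul, h, hwv, hB v, hB w, mul_zero, mul_one, mul_neg,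
    add_zero, zero_add, neg_eq_zero] at hv hw
  simp [hv, hw]

theorem span_pair_mem_nonsingularPlanes (hB : B.IsAlt) {W : Submodule K V} {x : V × V}
    (hx : x ∈ B.hyperbolicPairs W) : span K {x.1, x.2} ∈ B.nonsingularPlanes W :=
  ⟨span_le.mpr (Set.insert_subset hx.1 (Set.singleton_subset_iff.mpr hx.2.1)),
    finrank_span_pair_of_apply_eq_one hB hx.2.2, span_pair_inf_orthogonal_eq_bot hB hx.2.2⟩

theorem mem_hyperbolicPairs_iff_span_eq [FiniteDimensional K V] (hB : B.IsAlt)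
    {W H : Submodule K V} (hH : H ∈ B.nonsingularPlanes W) {x : V × V} :
    x ∈ B.hyperbolicPairs H ↔ x ∈ B.hyperbolicPairs W ∧ span K {x.1, x.2} = H := by
  constructor
  · intro hx
    refine ⟨⟨hH.1 hx.1, hH.1 hx.2.1, hx.2.2⟩, eq_of_le_of_finrank_le ?_ ?_⟩
    · exact span_le.mpr (Set.insert_subset hx.1 (Set.singleton_subset_iff.mpr hx.2.1))
    · rw [hH.2.1, finrank_span_pair_of_apply_eq_one hB hx.2.2]
  · rintro ⟨hx, rfl⟩
    exact ⟨subset_span (by simp), subset_span (by simp), hx.2.2⟩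

theorem natCard_hyperbolicPairs_of_mem_nonsingularPlanes [Finite K] [FiniteDimensional K V]
    (hB : B.IsAlt) {W H : Submodule K V} (hH : H ∈ B.nonsingularPlanes W) :
    Nat.card (B.hyperbolicPairs H) = (Nat.card K ^ 2 - 1) * Nat.card K := by
  rw [natCard_hyperbolicPairs hB, hH.2.1, hH.2.2, finrank_bot, pow_zero, pow_one]

theorem natCard_nonsingularPlanes_mul [Finite K] [FiniteDimensional K V] (hB : B.IsAlt)
    (W : Submodule K V) :
    Nat.card (B.nonsingularPlanes W) * ((Nat.card K ^ 2 - 1) * Nat.card K) =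
      Nat.card (B.hyperbolicPairs W) := by
  have : Finite V := Module.finite_iff_finite (R := K) |>.mp inferInstance
  have := Fintype.ofFinite (B.nonsingularPlanes W)
  let g : B.hyperbolicPairs W → B.nonsingularPlanes W :=
    fun x => ⟨span K {x.1.1, x.1.2}, span_pair_mem_nonsingularPlanes hB x.2⟩
  have hfiber : ∀ H, {x // g x = H} ≃ B.hyperbolicPairs H := fun H =>
    (Equiv.subtypeEquivRight fun _ => Subtype.ext_iff).trans <|
      (Equiv.subtypeSubtypeEquivSubtypeInter (· ∈ B.hyperbolicPairs W)
        fun x => span K {x.1, x.2} = H.1).trans <|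
      Equiv.subtypeEquivRight fun _ => (mem_hyperbolicPairs_iff_span_eq hB H.2).symm
  rw [← Nat.card_congr (Equiv.sigmaFiberEquiv g), Nat.card_sigma]
  simp only [fun H => Nat.card_congr (hfiber H),
    fun H : B.nonsingularPlanes W => natCard_hyperbolicPairs_of_mem_nonsingularPlanes hB H.2]
  rw [Finset.sum_const, Finset.card_univ, smul_eq_mul, Nat.card_eq_fintype_card]

theorem natCard_nonsingularPlanes [Finite K] [FiniteDimensional K V] (hB : B.IsAlt)
    {W : Submodule K V} {r m : ℕ} (hr : finrank K ↥(W ⊓ B.orthogonal W) = r)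
    (hW : finrank K W = r + 2 * m) :
    (Nat.card (B.nonsingularPlanes W) : ℚ) =
      (Nat.card K : ℚ) ^ (2 * (r + m - 1)) *
        (((Nat.card K : ℚ) ^ (2 * m) - 1) / ((Nat.card K : ℚ) ^ 2 - 1)) := by
  have hcount := natCard_nonsingularPlanes_mul hB W
  rw [natCard_hyperbolicPairs hB, hr, hW] at hcount
  set q := Nat.card K
  have hq : 1 < q := Finite.one_lt_card
  have hq2 : (q : ℚ) ^ 2 - 1 ≠ 0 := by
    have : (1 : ℚ) < (q : ℚ) ^ 2 := one_lt_pow₀ (by exact_mod_cast hq) two_ne_zero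
    linarith
  have hQ := congrArg (Nat.cast : ℕ → ℚ) hcount
  push_cast [Nat.one_le_pow _ _ (by omega : 0 < q),
    Nat.pow_le_pow_right (by omega : 0 < q) (Nat.le_add_right r (2 * m))] at hQ
  rw [← mul_div_assoc, eq_div_iff hq2]
  rcases m with _ | m
  · simpa [(by positivity : (q : ℚ) ≠ 0)] using hQ
  · rw [show r + 2 * (m + 1) - 1 = r + 2 * m + 1 by omega] at hQ
    rw [show 2 * (r + (m + 1) - 1) = r + (r + 2 * m) by omega]
    refine mul_right_cancel₀ (by positivity : (q : ℚ) ≠ 0) ?_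
    linear_combination hQ

theorem natCard_nonsingular_codimTwo [FiniteDimensional K V] (hB : B.Nondegenerate)
    (hB' : B.IsRefl) (hV : 2 ≤ finrank K V) (π : Submodule K V) :
    Nat.card {σ : Submodule K V //
        π ≤ σ ∧ finrank K σ = finrank K V - 2 ∧ σ ⊓ B.orthogonal σ = ⊥} =
      Nat.card (B.nonsingularPlanes (B.orthogonal π)) := by
  have horth (σ : Submodule K V) : B.orthogonal σ ⊓ B.orthogonal (B.orthogonal σ) =
      σ ⊓ B.orthogonal σ := by
    rw [orthogonal_orthogonal hB hB', inf_comm]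
  refine Nat.card_congr
    { toFun := fun σ => ⟨B.orthogonal σ.1, orthogonal_le σ.2.1,
        by rw [finrank_orthogonal hB, σ.2.2.1]; omega, by rw [horth, σ.2.2.2]⟩
      invFun := fun H => ⟨B.orthogonal H.1,
        (le_orthogonal_orthogonal hB').trans (orthogonal_le H.2.1),
        by rw [finrank_orthogonal hB, H.2.2.1], by rw [horth, H.2.2.2]⟩
      left_inv := fun σ => Subtype.ext (orthogonal_orthogonal hB hB' σ.1)
      right_inv := fun H => Subtype.ext (orthogonal_orthogonal hB hB' H.1) }

end LinearMap.BilinForm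

namespace IsSymplecticForm

variable {K V : Type} [Field K] [AddCommGroup V] [Module K V] {f : V → V → K}

def toBilinForm (hf : IsSymplecticForm f) : LinearMap.BilinForm K V :=
  LinearMap.mk₂ K f hf.1 hf.2.2.1 hf.2.1 hf.2.2.2.1

theorem isAlt (hf : IsSymplecticForm f) : hf.toBilinForm.IsAlt :=
  hf.2.2.2.2.1

theorem nondegenerate (hf : IsSymplecticForm f) : hf.toBilinForm.Nondegenerate :=
  hf.isAlt.isRefl.nondegenerate_iff_separatingLeft.mpr hf.2.2.2.2.2

theorem radDim_eq (hf : IsSymplecticForm f) (W : Submodule K V) :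
    radDim f W = finrank K ↥(W ⊓ hf.toBilinForm.orthogonal W) := by
  have hrad : {v | v ∈ W ∧ ∀ w ∈ W, f v w = 0} = ↑(W ⊓ hf.toBilinForm.orthogonal W) :=
    Set.ext fun _ => and_congr_right fun _ => forall₂_congr fun _ _ => hf.isAlt.eq_iff
  rw [radDim, hrad, span_eq]

end IsSymplecticForm

theorem symplectic_beta_codim2_general
    (q : ℕ)
    (K : Type) [Field K] [Fintype K] (hK : Fintype.card K = q)
    (n : ℕ)
    (f : (Fin (2 * n) → K) → (Fin (2 * n) → K) → K) (hf : IsSymplecticForm f)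
    (j ℓ : ℕ) (hℓ1 : j + 1 ≤ n + ℓ) (hℓ2 : 2 * ℓ ≤ j)
    (π : Submodule K (Fin (2 * n) → K))
    (hπd : Module.finrank K π = j) (hπs : radDim f π = j - 2 * ℓ) :
    (Nat.card {σ : Submodule K (Fin (2 * n) → K) //
        π ≤ σ ∧ Module.finrank K σ = 2 * n - 2 ∧ radDim f σ = 0} : ℚ) =
      (q : ℚ) ^ (2 * (n - ℓ - 1)) *
        (((q : ℚ) ^ (2 * (n + ℓ - j)) - 1) / ((q : ℚ) ^ 2 - 1)) := by
  set B := hf.toBilinForm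
  have hV : finrank K (Fin (2 * n) → K) = 2 * n := finrank_fin_fun K
  have hW : finrank K (B.orthogonal π) = (j - 2 * ℓ) + 2 * (n + ℓ - j) := by
    rw [LinearMap.BilinForm.finrank_orthogonal hf.nondegenerate, hV, hπd]
    omega
  have hrad : finrank K ↥(B.orthogonal π ⊓ B.orthogonal (B.orthogonal π)) = j - 2 * ℓ := by
    rw [LinearMap.BilinForm.orthogonal_orthogonal hf.nondegenerate hf.isAlt.isRefl, inf_comm,
      ← hf.radDim_eq, hπs]
  have hσ : ∀ σ : Submodule K (Fin (2 * n) → K),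
      π ≤ σ ∧ finrank K σ = 2 * n - 2 ∧ radDim f σ = 0 ↔
        π ≤ σ ∧ finrank K σ = finrank K (Fin (2 * n) → K) - 2 ∧ σ ⊓ B.orthogonal σ = ⊥ :=
    fun σ => by rw [hf.radDim_eq, finrank_eq_zero, hV]
  rw [Nat.card_congr (Equiv.subtypeEquivRight hσ),
    LinearMap.BilinForm.natCard_nonsingular_codimTwo hf.nondegenerate hf.isAlt.isRefl (by omega),
    LinearMap.BilinForm.natCard_nonsingularPlanes hf.isAlt hrad hW, Nat.card_eq_fintype_card, hK,
    show j - 2 * ℓ + (n + ℓ - j) - 1 = n - ℓ - 1 by omega]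

theorem symplectic_beta_codim2
    (p t q : ℕ) (hp : p.Prime) (ht : 0 < t) (hq : q = p ^ t)
    (K : Type) [Field K] [Fintype K] (hK : Fintype.card K = q)
    (n : ℕ)
    (f : (Fin (2 * n) → K) → (Fin (2 * n) → K) → K) (hf : IsSymplecticForm f)
    (j ℓ : ℕ) (hℓ1 : j + 1 ≤ n + ℓ) (hℓ2 : 2 * ℓ ≤ j) (hj : j ≤ 2 * n - 2)
    (π : Submodule K (Fin (2 * n) → K))
    (hπd : Module.finrank K π = j) (hπs : radDim f π = j - 2 * ℓ) :
    (Nat.card {σ : Submodule K (Fin (2 * n) → K) //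
        π ≤ σ ∧ Module.finrank K σ = 2 * n - 2 ∧ radDim f σ = 0} : ℚ) =
      (q : ℚ) ^ (2 * (n - ℓ - 1)) *
        (((q : ℚ) ^ (2 * (n + ℓ - j)) - 1) / ((q : ℚ) ^ 2 - 1)) :=
  symplectic_beta_codim2_general q K hK n f hf j ℓ hℓ1 hℓ2 π hπd hπs
end
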